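/- Let V be a real vector space of dimension n and φ ∈ End(V) nonderogatory whose only eigenvalues are a complex conjugate pair z = r + is, z̄ with s ≠ 0 (so n is even and χ_φ(X) = ((X−r)² + s²)^{n/2}). Then there exists a basis of V in which the matrix of φ equals r·Id + s·M_s + M_n, where M_s = −Σ_{j=0}^{n/2−1}(E_{2j+1,2j+2} − E_{2j+2,2j+1}) and M_n = Σ_{j=1}^{n−2} E_{j,j+2}. -/

import Mathlib

/-!
Over `ℂ`, `φ` has a single Jordan block for `z̄ = r - s i`: with `p = (X - r)² + s²`, any `v`
with `p ^ (m - 1) (φ) v ≠ 0` has annihilator `(p ^ m)`, and the vectors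
`p ^ (m - j) (φ) (φ - z) ^ j v`, `j = 1, …, m`, form a Jordan chain for `z̄`, because
`(X - z̄) (X - z) ^ j = p (X - z) ^ (j - 1)`. Writing `(X - z) ^ j = R_j + i I_j` with real
`R_j, I_j`, the real and imaginary parts of this chain satisfy exactly the column relations of
`r • 1 + s • M_s + M_n`.

They are linearly independent because the annihilator of `v` is `(p ^ m)` and no nontrivial
combination `∑ j, p ^ (m - j) (a_j R_j + b_j I_j)` is divisible by `p ^ m`: over `ℂ` twice this
combination is `(X - z) ^ m U + (X - z̄) ^ m W` with `U = ∑ j, (a_j - i b_j) (X - z̄) ^ (m - j)`.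
As `X - z` and `X - z̄` are coprime, `(X - z̄) ^ m ∣ U`, so `U = 0` by degree, and all
`a_j - i b_j` vanish.
-/

open Polynomial

theorem Fin.sum_univ_two_mul {M : Type*} [AddCommMonoid M] {m : ℕ} (f : Fin (2 * m) → M) :
    ∑ k, f k = ∑ j : Fin m, (f ⟨2 * j, by omega⟩ + f ⟨2 * j + 1, by omega⟩) := by
  rw [← (finProdFinEquiv.trans (finCongr (mul_comm m 2))).sum_comp, Fintype.sum_prod_type]
  refine Finset.sum_congr rfl fun j _ => ?_
  rw [Fin.sum_univ_two]
  congr 2 <;> ext <;> simp [add_comm, mul_comm]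

theorem Matrix.toLin_sum_single_one_apply {ι κ R M : Type*} [CommSemiring R] [AddCommMonoid M]
    [Module R M] [Fintype ι] [DecidableEq ι] [Fintype κ] (b : Module.Basis ι R M)
    (f g : κ → ι) (k : ι) :
    Matrix.toLin b b (∑ j, Matrix.single (f j) (g j) (1 : R)) (b k)
      = ∑ j, if g j = k then b (f j) else 0 := by
  simp [Matrix.toLin_self, Matrix.single_apply, ite_and]

theorem Polynomial.linearIndependent_X_sub_C_pow {R : Type*} [CommRing R] (x : R) :
    LinearIndependent R fun i : ℕ => (X - C x) ^ i := by
  have h := (basisMonomials R).linearIndependent.map' (taylor (-x))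
    (LinearMap.ker_eq_bot.mpr (taylor_injective (-x)))
  simpa [Function.comp_def, taylor_X_pow, sub_eq_add_neg] using h

theorem Polynomial.eq_zero_of_X_sub_C_pow_dvd_mul_sum {K : Type*} [Field K] {x y : K}
    (hxy : x ≠ y) {m : ℕ} (c : Fin m → K)
    (h : (X - C y) ^ m ∣ (X - C x) ^ m * ∑ j : Fin m, C (c j) * (X - C y) ^ (m - (j + 1))) :
    c = 0 := by
  obtain rfl | hm := m.eq_zero_or_pos
  · exact Subsingleton.elim _ _
  set U := ∑ j : Fin m, C (c j) * (X - C y) ^ (m - (j + 1))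
  have hcop : IsCoprime ((X - C y) ^ m) ((X - C x) ^ m) :=
    (isCoprime_X_sub_C_of_isUnit_sub (sub_ne_zero.mpr hxy.symm).isUnit).pow
  have hdeg : U.natDegree < ((X - C y) ^ m).natDegree := by
    rw [natDegree_pow, natDegree_X_sub_C, mul_one]
    refine (natDegree_sum_le_of_forall_le _ _ fun j _ => ?_).trans_lt (Nat.sub_lt hm one_pos)
    refine (natDegree_C_mul_le _ _).trans ?_
    rw [natDegree_pow, natDegree_X_sub_C, mul_one]
    omega
  have hU : U = 0 := eq_zero_of_dvd_of_natDegree_lt (hcop.dvd_of_dvd_mul_left h) hdeg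
  have hinj : Function.Injective fun j : Fin m => m - (j + 1) := fun i j hij => by
    have := i.2; have := j.2; simp only at hij; omega
  funext j
  exact Fintype.linearIndependent_iff.mp ((linearIndependent_X_sub_C_pow y).comp _ hinj) c
    (by simpa [U, smul_eq_C_mul] using hU) j

section Module

variable {K V : Type*} [AddCommGroup V]

theorem Module.End.apply_aeval_apply_eq [CommRing K] [Module K V] (φ : Module.End K V) (v : V)
    {f g h : K[X]} (c d : K) (hf : f = (X - C c) * g - C d * h) :
    φ (aeval φ g v) = c • aeval φ g v + d • aeval φ h v + aeval φ f v := by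
  subst hf
  simp [sub_mul, Module.End.mul_apply, Module.algebraMap_end_apply]

variable [Field K] [Module K V]

theorem Module.End.pow_dvd_of_aeval_apply_eq_zero {φ : Module.End K V} {p : K[X]} (hp : Prime p)
    {m : ℕ} (hφ : aeval φ (p ^ m) = 0) {v : V} (hv : aeval φ (p ^ (m - 1)) v ≠ 0) {q : K[X]}
    (hq : aeval φ q v = 0) : p ^ m ∣ q := by
  classical
  have hg : aeval φ (EuclideanDomain.gcd (p ^ m) q) v = 0 := by
    rw [EuclideanDomain.gcd_eq_gcd_ab, mul_comm (p ^ m), mul_comm q]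
    simp [Module.End.mul_apply, hφ, hq]
  obtain ⟨i, hi, hassoc⟩ := (dvd_prime_pow hp m).mp (EuclideanDomain.gcd_dvd_left (p ^ m) q)
  obtain rfl | hlt := hi.eq_or_lt
  · exact hassoc.symm.dvd.trans (EuclideanDomain.gcd_dvd_right _ _)
  · obtain ⟨c, hc⟩ := hassoc.dvd.trans (pow_dvd_pow p (Nat.le_sub_one_of_lt hlt))
    refine absurd ?_ hv
    rw [hc, mul_comm, map_mul, Module.End.mul_apply, hg, map_zero]

theorem Module.End.exists_aeval_pow_pred_apply_ne_zero [FiniteDimensional K V]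
    {φ : Module.End K V} {p : K[X]} (hp : Prime p) (hmonic : p.Monic) {m : ℕ} (hm : 0 < m)
    (hmin : minpoly K φ = p ^ m) : ∃ v, aeval φ (p ^ (m - 1)) v ≠ 0 := by
  have hne : aeval φ (p ^ (m - 1)) ≠ 0 := by
    refine minpoly.aeval_ne_zero_of_dvdNotUnit_minpoly (Algebra.IsIntegral.isIntegral φ)
      (hmonic.pow _) ?_
    rw [hmin]
    refine ⟨(hmonic.pow _).ne_zero, p, hp.not_isUnit, ?_⟩
    rw [← pow_succ, Nat.sub_add_cancel hm]
  by_contra! h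
  exact hne (LinearMap.ext h)

end Module

noncomputable section

namespace RealJordan

section Matrices

variable (R : Type*) [CommRing R] (m : ℕ)

def rotationMatrix : Matrix (Fin (2 * m)) (Fin (2 * m)) R :=
  -∑ j : Fin m, (Matrix.single ⟨2 * j, by omega⟩ ⟨2 * j + 1, by omega⟩ 1 -
    Matrix.single ⟨2 * j + 1, by omega⟩ ⟨2 * j, by omega⟩ 1)

def shiftMatrix : Matrix (Fin (2 * m)) (Fin (2 * m)) R :=
  ∑ j : Fin (2 * m - 2), Matrix.single ⟨j, by omega⟩ ⟨j + 2, by omega⟩ 1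

variable {R m} {V : Type*} [AddCommGroup V] [Module R V] (b : Module.Basis (Fin (2 * m)) R V)

theorem toLin_rotationMatrix_two_mul (j : Fin m) :
    Matrix.toLin b b (rotationMatrix R m) (b ⟨2 * j, by omega⟩)
      = b ⟨2 * j + 1, by omega⟩ := by
  rw [rotationMatrix, Finset.sum_sub_distrib, map_neg, map_sub, LinearMap.neg_apply,
    LinearMap.sub_apply, Matrix.toLin_sum_single_one_apply, Matrix.toLin_sum_single_one_apply]
  simp [Nat.two_mul_ne_two_mul_add_one.symm, Fin.val_inj]

theorem toLin_rotationMatrix_two_mul_add_one (j : Fin m) :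
    Matrix.toLin b b (rotationMatrix R m) (b ⟨2 * j + 1, by omega⟩)
      = -b ⟨2 * j, by omega⟩ := by
  rw [rotationMatrix, Finset.sum_sub_distrib, map_neg, map_sub, LinearMap.neg_apply,
    LinearMap.sub_apply, Matrix.toLin_sum_single_one_apply, Matrix.toLin_sum_single_one_apply]
  simp [Nat.two_mul_ne_two_mul_add_one, Fin.val_inj]

variable {W : ℕ → V}

theorem toLin_shiftMatrix_apply (hb : ∀ k, b k = W (k + 2)) (h0 : W 0 = 0) (h1 : W 1 = 0)
    (k : Fin (2 * m)) :
    Matrix.toLin b b (shiftMatrix R m) (b k) = W k := by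
  rw [shiftMatrix, Matrix.toLin_sum_single_one_apply]
  obtain ⟨_ | _ | i, hk⟩ := k
  · simpa using h0.symm
  · simpa using h1.symm
  · rw [Finset.sum_eq_single ⟨i, by omega⟩ (by simp [Fin.ext_iff]; omega) (by simp),
      if_pos rfl, hb]

theorem toMatrix_eq_of_apply (hb : ∀ k, b k = W (k + 2)) (h0 : W 0 = 0) (h1 : W 1 = 0)
    (φ : Module.End R V) (r s : R)
    (heven : ∀ j < m, φ (W (2 * j + 2)) = r • W (2 * j + 2) + s • W (2 * j + 3) + W (2 * j))
    (hodd : ∀ j < m,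
      φ (W (2 * j + 3)) = r • W (2 * j + 3) - s • W (2 * j + 2) + W (2 * j + 1)) :
    LinearMap.toMatrix b b φ = r • 1 + s • rotationMatrix R m + shiftMatrix R m := by
  suffices φ = Matrix.toLin b b (r • 1 + s • rotationMatrix R m + shiftMatrix R m) by
    rw [this, LinearMap.toMatrix_toLin]
  refine b.ext fun k => ?_
  simp only [map_add, map_smul, Matrix.toLin_one, LinearMap.add_apply, LinearMap.smul_apply,
    LinearMap.id_apply, toLin_shiftMatrix_apply b hb h0 h1]
  obtain ⟨k, hk⟩ := k
  obtain ⟨j, rfl | rfl⟩ := Nat.even_or_odd' k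
  · rw [toLin_rotationMatrix_two_mul b ⟨j, by omega⟩, hb, hb]
    exact heven j (by omega)
  · rw [toLin_rotationMatrix_two_mul_add_one b ⟨j, by omega⟩, hb, hb, smul_neg,
      ← sub_eq_add_neg]
    exact hodd j (by omega)

end Matrices

variable (r s : ℝ)

def conjPairPoly : ℝ[X] := (X - C r) ^ 2 + C (s ^ 2)

theorem conjPairPoly_prime (hs : s ≠ 0) : Prime (conjPairPoly r s) := by
  refine Irreducible.prime (irreducible_of_degree_le_three_of_not_isRoot ?_ fun x hx => ?_)
  · have : (conjPairPoly r s).natDegree = 2 := by unfold conjPairPoly; compute_degree!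
    simp [this]
  · have : 0 < (x - r) ^ 2 + s ^ 2 := by positivity
    simp [conjPairPoly, IsRoot] at hx
    linarith

theorem conjPairPoly_monic : (conjPairPoly r s).Monic := by
  unfold conjPairPoly; monicity!

/-- Real and imaginary parts of `(X - (r + s i)) ^ k`. -/
def rotPow : ℕ → ℝ[X] × ℝ[X]
  | 0 => (1, 0)
  | k + 1 => ((X - C r) * (rotPow k).1 + C s * (rotPow k).2,
              (X - C r) * (rotPow k).2 - C s * (rotPow k).1)

theorem conjPairPoly_mul_rotPow_fst (k : ℕ) :
    conjPairPoly r s * (rotPow r s k).1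
      = (X - C r) * (rotPow r s (k + 1)).1 - C s * (rotPow r s (k + 1)).2 := by
  simp only [rotPow, conjPairPoly, C_pow]; ring

theorem conjPairPoly_mul_rotPow_snd (k : ℕ) :
    conjPairPoly r s * (rotPow r s k).2
      = (X - C r) * (rotPow r s (k + 1)).2 - C (-s) * (rotPow r s (k + 1)).1 := by
  simp only [rotPow, conjPairPoly, C_pow, C_neg]; ring

local notation "ρ" => Polynomial.map (algebraMap ℝ ℂ)

theorem map_rotPow {ε : ℂ} (hε : ε * ε = -1) (k : ℕ) :
    ρ (rotPow r s k).1 + C ε * ρ (rotPow r s k).2 = (X - C (r + s * ε)) ^ k := by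
  induction k with
  | zero => simp [rotPow]
  | succ k ih =>
    have hC : (C ε * C ε : ℂ[X]) = -1 := by rw [← C_mul, hε, C_neg, C_1]
    rw [pow_succ, ← ih]
    simp only [rotPow, Polynomial.map_add, Polynomial.map_sub, Polynomial.map_mul,
      Polynomial.map_X, Polynomial.map_C, map_add, map_mul, Complex.coe_algebraMap]
    linear_combination (C (s : ℂ) * ρ (rotPow r s k).2) * hC

theorem map_conjPairPoly {ε : ℂ} (hε : ε * ε = -1) :
    ρ (conjPairPoly r s) = (X - C (r + s * ε)) * (X - C (r - s * ε)) := by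
  have hC : (C ε * C ε : ℂ[X]) = -1 := by rw [← C_mul, hε, C_neg, C_1]
  simp only [conjPairPoly, Polynomial.map_add, Polynomial.map_pow, Polynomial.map_sub,
    Polynomial.map_X, Polynomial.map_C, map_add, map_sub, map_mul, map_pow,
    Complex.coe_algebraMap]
  linear_combination (C (s : ℂ)) ^ 2 * hC

/-- Interleaved real and imaginary parts of `p ^ (m - j) * (X - (r + s i)) ^ j`, where
`p = conjPairPoly r s`: `chainPoly r s m (2 * j)` and `chainPoly r s m (2 * j + 1)`. -/
def chainPoly (m n : ℕ) : ℝ[X] :=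
  conjPairPoly r s ^ (m - n / 2) *
    if Even n then (rotPow r s (n / 2)).1 else (rotPow r s (n / 2)).2

variable {r s}

theorem chainPoly_two_mul (m j : ℕ) :
    chainPoly r s m (2 * j) = conjPairPoly r s ^ (m - j) * (rotPow r s j).1 := by
  simp [chainPoly]

theorem chainPoly_two_mul_add_one (m j : ℕ) :
    chainPoly r s m (2 * j + 1) = conjPairPoly r s ^ (m - j) * (rotPow r s j).2 := by
  simp [chainPoly, show (2 * j + 1) / 2 = j by omega]

theorem chainPoly_zero (m : ℕ) : chainPoly r s m 0 = conjPairPoly r s ^ m := by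
  simpa [rotPow] using chainPoly_two_mul (r := r) (s := s) m 0

theorem chainPoly_one (m : ℕ) : chainPoly r s m 1 = 0 := by
  simpa [rotPow] using chainPoly_two_mul_add_one (r := r) (s := s) m 0

theorem chainPoly_two_mul_eq_sub {m j : ℕ} (hj : j < m) :
    chainPoly r s m (2 * j) =
      (X - C r) * chainPoly r s m (2 * j + 2) - C s * chainPoly r s m (2 * j + 3) := by
  rw [show 2 * j + 3 = 2 * (j + 1) + 1 by ring, show 2 * j + 2 = 2 * (j + 1) by ring,
    chainPoly_two_mul, chainPoly_two_mul, chainPoly_two_mul_add_one,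
    show m - j = m - (j + 1) + 1 by omega, pow_succ, mul_assoc, conjPairPoly_mul_rotPow_fst]
  ring

theorem chainPoly_two_mul_add_one_eq_sub {m j : ℕ} (hj : j < m) :
    chainPoly r s m (2 * j + 1) =
      (X - C r) * chainPoly r s m (2 * j + 3) - C (-s) * chainPoly r s m (2 * j + 2) := by
  rw [show 2 * j + 3 = 2 * (j + 1) + 1 by ring, show 2 * j + 2 = 2 * (j + 1) by ring,
    chainPoly_two_mul_add_one, chainPoly_two_mul, chainPoly_two_mul_add_one,
    show m - j = m - (j + 1) + 1 by omega, pow_succ, mul_assoc, conjPairPoly_mul_rotPow_snd]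
  ring

theorem map_chainPoly {ε : ℂ} (hε : ε * ε = -1) {m j : ℕ} (hj : j < m) :
    ρ (chainPoly r s m (2 * j + 2)) + C ε * ρ (chainPoly r s m (2 * j + 3))
      = (X - C (r + s * ε)) ^ m * (X - C (r - s * ε)) ^ (m - (j + 1)) := by
  rw [show 2 * j + 3 = 2 * (j + 1) + 1 by ring, show 2 * j + 2 = 2 * (j + 1) by ring,
    chainPoly_two_mul, chainPoly_two_mul_add_one, Polynomial.map_mul, Polynomial.map_mul,
    Polynomial.map_pow, map_conjPairPoly r s hε, mul_left_comm, ← mul_add, map_rotPow r s hε,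
    mul_pow, mul_right_comm, ← pow_add, Nat.sub_add_cancel hj]

open Complex in
theorem eq_zero_of_pow_dvd_sum_chainPoly (hs : s ≠ 0) {m : ℕ} (a b : Fin m → ℝ)
    (h : conjPairPoly r s ^ m ∣
      ∑ j : Fin m, (a j • chainPoly r s m (2 * j + 2) + b j • chainPoly r s m (2 * j + 3))) :
    ∀ j, a j = 0 ∧ b j = 0 := by
  set P :=
    ∑ j : Fin m, (a j • chainPoly r s m (2 * j + 2) + b j • chainPoly r s m (2 * j + 3))
  set Z : ℂ[X] := X - C (r + s * I)
  set Z' : ℂ[X] := X - C (r - s * I)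
  have hCI : (C I * C I : ℂ[X]) = -1 := by rw [← C_mul, I_mul_I, C_neg, C_1]
  have hnegI : -I * -I = -1 := by rw [neg_mul_neg, I_mul_I]
  have hconj (j : Fin m) :
      ρ (chainPoly r s m (2 * j + 2)) + C (-I) * ρ (chainPoly r s m (2 * j + 3))
        = Z' ^ m * Z ^ (m - (j + 1)) := by
    simpa [Z, Z', ← sub_eq_add_neg] using map_chainPoly hnegI j.2
  set U := ∑ j : Fin m, C ((a j : ℂ) - b j * I) * Z' ^ (m - (j + 1))
  set W := ∑ j : Fin m, C ((a j : ℂ) + b j * I) * Z ^ (m - (j + 1))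
  have hsplit : 2 * ρ P = Z ^ m * U + Z' ^ m * W := by
    simp only [P, U, W, Polynomial.map_sum, Finset.mul_sum, ← Finset.sum_add_distrib]
    refine Finset.sum_congr rfl fun j _ => ?_
    rw [mul_left_comm, ← map_chainPoly I_mul_I j.2, mul_left_comm, ← hconj]
    simp only [smul_eq_C_mul, Polynomial.map_add, Polynomial.map_mul, Polynomial.map_C, map_sub,
      map_add, map_mul, map_neg, Complex.coe_algebraMap]
    linear_combination (2 * C (b j : ℂ) * ρ (chainPoly r s m (2 * j + 3))) * hCI
  have hdvd : Z' ^ m ∣ Z ^ m * U := by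
    have hp : Z' ^ m ∣ ρ (conjPairPoly r s ^ m) := by
      rw [Polynomial.map_pow, map_conjPairPoly r s I_mul_I, mul_pow]
      exact dvd_mul_left _ _
    rw [← add_sub_cancel_right (Z ^ m * U) (Z' ^ m * W), ← hsplit]
    exact dvd_sub (dvd_mul_of_dvd_right (hp.trans (map_dvd (algebraMap ℝ ℂ) h)) 2)
      (dvd_mul_right _ _)
  have hne : (r : ℂ) + s * I ≠ r - s * I := by simp [Complex.ext_iff, self_eq_neg, hs]
  have hc := congrFun (eq_zero_of_X_sub_C_pow_dvd_mul_sum hne _ hdvd)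
  exact fun j => ⟨by simpa using congrArg re (hc j), by simpa using congrArg im (hc j)⟩

theorem linearIndependent_aeval_chainPoly {V : Type*} [AddCommGroup V] [Module ℝ V]
    (hs : s ≠ 0) {m : ℕ} {φ : Module.End ℝ V} (hφ : aeval φ (conjPairPoly r s ^ m) = 0)
    {v : V} (hv : aeval φ (conjPairPoly r s ^ (m - 1)) v ≠ 0) :
    LinearIndependent ℝ fun k : Fin (2 * m) => aeval φ (chainPoly r s m (k + 2)) v := by
  refine Fintype.linearIndependent_iff.mpr fun g hg => ?_
  have hdvd := Module.End.pow_dvd_of_aeval_apply_eq_zero (conjPairPoly_prime r s hs) hφ hv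
    (q := ∑ k, g k • chainPoly r s m (k + 2)) (by simpa [map_sum] using hg)
  rw [Fin.sum_univ_two_mul] at hdvd
  have hg0 := eq_zero_of_pow_dvd_sum_chainPoly hs _ _ hdvd
  rintro ⟨k, hk⟩
  obtain ⟨j, rfl | rfl⟩ := Nat.even_or_odd' k
  · exact (hg0 ⟨j, by omega⟩).1
  · exact (hg0 ⟨j, by omega⟩).2

end RealJordan

end

open RealJordan in
/-- Real Jordan form: a nonderogatory `φ ∈ End(V)`, `dim V = n = 2m`, whose only
eigenvalues are a complex conjugate pair `r ± is` with `s ≠ 0` (so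
`χ_φ(X) = ((X-r)² + s²)^m`), admits a basis in which its matrix is
`r·Id + s·M_s + M_n`, with `M_s = -Σ_{j=0}^{m-1}(E_{2j+1,2j+2} - E_{2j+2,2j+1})` and
`M_n = Σ_{j=1}^{n-2} E_{j,j+2}` (1-indexed). -/
theorem stmt16 {V : Type*} [AddCommGroup V] [Module ℝ V] [FiniteDimensional ℝ V]
    {n m : ℕ} (hm : 0 < m) (hn : n = 2 * m) (hV : Module.finrank ℝ V = n)
    (φ : Module.End ℝ V) (r s : ℝ) (hs : s ≠ 0)
    (hnd : LinearMap.charpoly φ = minpoly ℝ φ)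
    (hchar : LinearMap.charpoly φ = ((X - C r) ^ 2 + C (s ^ 2)) ^ m)
    (Ms Mn : Matrix (Fin n) (Fin n) ℝ)
    (hMs : Ms = -∑ j : Fin m,
      (Matrix.single (⟨2 * j.1, by have := j.2; omega⟩ : Fin n)
          (⟨2 * j.1 + 1, by have := j.2; omega⟩ : Fin n) (1 : ℝ) -
        Matrix.single (⟨2 * j.1 + 1, by have := j.2; omega⟩ : Fin n)
          (⟨2 * j.1, by have := j.2; omega⟩ : Fin n) (1 : ℝ)))
    (hMn : Mn = ∑ j : Fin (n - 2),
      Matrix.single (⟨j.1, by have := j.2; omega⟩ : Fin n)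
        (⟨j.1 + 2, by have := j.2; omega⟩ : Fin n) (1 : ℝ)) :
    ∃ b : Module.Basis (Fin n) ℝ V,
      LinearMap.toMatrix b b φ = r • (1 : Matrix (Fin n) (Fin n) ℝ) + s • Ms + Mn := by
  subst hn
  obtain rfl : Ms = rotationMatrix ℝ m := hMs
  obtain rfl : Mn = shiftMatrix ℝ m := hMn
  have hmin : minpoly ℝ φ = conjPairPoly r s ^ m := hnd ▸ hchar
  have hφ : aeval φ (conjPairPoly r s ^ m) = 0 := hmin ▸ minpoly.aeval ℝ φ
  obtain ⟨v, hv⟩ := Module.End.exists_aeval_pow_pred_apply_ne_zero (conjPairPoly_prime r s hs)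
    (conjPairPoly_monic r s) hm hmin
  set W : ℕ → V := fun k => aeval φ (chainPoly r s m k) v
  have hli := linearIndependent_aeval_chainPoly hs hφ hv
  have : Nonempty (Fin (2 * m)) := ⟨⟨0, by omega⟩⟩
  let b := basisOfLinearIndependentOfCardEqFinrank hli (by simp [hV])
  refine ⟨b, toMatrix_eq_of_apply b (W := W) (by simp [b, W]) (by simp [W, chainPoly_zero, hφ])
    (by simp [W, chainPoly_one]) φ r s (fun j hj => ?_) (fun j hj => ?_)⟩
  · exact Module.End.apply_aeval_apply_eq φ v r s (chainPoly_two_mul_eq_sub hj)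
  · simpa [sub_eq_add_neg] using
      Module.End.apply_aeval_apply_eq φ v r (-s) (chainPoly_two_mul_add_one_eq_sub hj)
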